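/- Suppose each of N boats produces force fᵢ ∈ [−f_max, f_max]. The set of achievable (F, τ) = (Σ fᵢ, Σ fᵢ xᵢ) is a compact convex symmetric subset of ℝ², and it contains a neighborhood of the origin if and only if not all xᵢ are equal (i.e., controllability in surge and yaw holds iff the boats are not collocated). -/
import Mathlib


theorem achievable_wrench_set_properties
    (N : ℕ) (hN : 2 ≤ N) (f_max : ℝ) (hf : 0 < f_max)
    (x : Fin N → ℝ)
    (S : Set (ℝ × ℝ))
    (hS : S = {p : ℝ × ℝ | ∃ f : Fin N → ℝ,
      (∀ i, |f i| ≤ f_max) ∧ p = (∑ i, f i, ∑ i, f i * x i)}) :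
    IsCompact S ∧ Convex ℝ S ∧ (∀ p ∈ S, -p ∈ S) ∧
    ((∃ ε > 0, Metric.ball (0 : ℝ × ℝ) ε ⊆ S) ↔ ∃ i j : Fin N, x i ≠ x j) := by
  subst hS
  refine ⟨?_, ?_, ?_, ?_⟩
  · -- compactness
    have hrepr : {p : ℝ × ℝ | ∃ f : Fin N → ℝ,
        (∀ i, |f i| ≤ f_max) ∧ p = (∑ i, f i, ∑ i, f i * x i)} =
        (fun f : Fin N → ℝ => ((∑ i, f i, ∑ i, f i * x i) : ℝ × ℝ)) ''
          (Set.pi Set.univ fun _ => Set.Icc (-f_max) f_max) := by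
      ext p
      constructor
      · rintro ⟨f, hf1, rfl⟩
        exact ⟨f, fun i _ => abs_le.mp (hf1 i), rfl⟩
      · rintro ⟨f, hf1, rfl⟩
        exact ⟨f, fun i => abs_le.mpr (hf1 i (Set.mem_univ i)), rfl⟩
    rw [hrepr]
    refine (isCompact_univ_pi fun _ => isCompact_Icc).image ?_
    exact (continuous_finset_sum _ fun i _ => continuous_apply i).prodMk
      (continuous_finset_sum _ fun i _ => (continuous_apply i).mul continuous_const)
  · -- convexity
    rintro p ⟨f, hf1, rfl⟩ q ⟨g, hg1, rfl⟩ a b ha hb hab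
    refine ⟨fun i => a * f i + b * g i, fun i => ?_, ?_⟩
    · calc |a * f i + b * g i| ≤ |a * f i| + |b * g i| := abs_add_le _ _
        _ = a * |f i| + b * |g i| := by
            rw [abs_mul, abs_mul, abs_of_nonneg ha, abs_of_nonneg hb]
        _ ≤ a * f_max + b * f_max := by
            gcongr <;> [exact hf1 i; exact hg1 i]
        _ = f_max := by rw [← add_mul, hab, one_mul]
    · simp only [Prod.smul_mk, Prod.mk_add_mk, smul_eq_mul, Prod.mk.injEq]
      constructor
      · rw [Finset.mul_sum, Finset.mul_sum, ← Finset.sum_add_distrib]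
      · rw [Finset.mul_sum, Finset.mul_sum, ← Finset.sum_add_distrib]
        exact Finset.sum_congr rfl fun i _ => by ring
  · -- symmetry
    rintro p ⟨f, hf1, rfl⟩
    refine ⟨fun i => -f i, fun i => by rw [abs_neg]; exact hf1 i, ?_⟩
    simp only [Prod.neg_mk, Prod.mk.injEq]
    constructor
    · rw [← Finset.sum_neg_distrib]
    · rw [← Finset.sum_neg_distrib]
      exact Finset.sum_congr rfl fun i _ => by ring
  · constructor
    · -- ball → not collocated
      rintro ⟨ε, hε, hball⟩
      by_contra h
      push_neg at h
      have i0 : Fin N := ⟨0, by omega⟩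
      have hx : ∀ i, x i = x i0 := fun i => h i i0
      have hmem : ((0, ε / 2) : ℝ × ℝ) ∈ Metric.ball (0 : ℝ × ℝ) ε := by
        rw [Metric.mem_ball, dist_zero_right, Prod.norm_def]
        simp [abs_of_nonneg hε.le]
        linarith
      obtain ⟨f, hf1, hpeq⟩ := hball hmem
      have h1 : (0 : ℝ) = ∑ i, f i := congrArg Prod.fst hpeq
      have h2 : ε / 2 = ∑ i, f i * x i := congrArg Prod.snd hpeq
      have h3 : ∑ i, f i * x i = (∑ i, f i) * x i0 := by
        rw [Finset.sum_mul]
        exact Finset.sum_congr rfl fun i _ => by rw [hx i]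
      rw [h3, ← h1, zero_mul] at h2
      linarith
    · -- not collocated → ball
      rintro ⟨i, j, hij⟩
      have hij' : i ≠ j := fun h => hij (by rw [h])
      set d : ℝ := x j - x i with hd_def
      have hd : d ≠ 0 := sub_ne_zero.mpr (Ne.symm hij)
      have hdpos : 0 < |d| := abs_pos.mpr hd
      set K : ℝ := (1 + |x i|) / |d| with hK_def
      have hK : 0 ≤ K := div_nonneg (by positivity) hdpos.le
      set C : ℝ := 1 + 2 * K with hC_def
      have hC : 0 < C := by positivity
      refine ⟨f_max / C, by positivity, ?_⟩
      intro p hp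
      rw [Metric.mem_ball, dist_zero_right] at hp
      have hnp : 0 ≤ ‖p‖ := norm_nonneg p
      have hp1 : |p.1| ≤ ‖p‖ := by
        rw [← Real.norm_eq_abs]; exact norm_fst_le p
      have hp2 : |p.2| ≤ ‖p‖ := by
        rw [← Real.norm_eq_abs]; exact norm_snd_le p
      set b : ℝ := (p.2 - x i * p.1) / d with hb_def
      set a : ℝ := p.1 - b with ha_def
      have hbbound : |b| ≤ ‖p‖ * K := by
        rw [hb_def, abs_div]
        rw [hK_def, ← mul_div_assoc]
        have hnum : |p.2 - x i * p.1| ≤ ‖p‖ * (1 + |x i|) :=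
          calc |p.2 - x i * p.1| ≤ |p.2| + |x i * p.1| := abs_sub _ _
            _ = |p.2| + |x i| * |p.1| := by rw [abs_mul]
            _ ≤ ‖p‖ + |x i| * ‖p‖ := by gcongr
            _ = ‖p‖ * (1 + |x i|) := by ring
        gcongr
      have habound : |a| ≤ ‖p‖ * C := by
        calc |a| ≤ |p.1| + |b| := abs_sub _ _
          _ ≤ ‖p‖ + ‖p‖ * K := by gcongr
          _ ≤ ‖p‖ * C := by rw [hC_def]; nlinarith
      have hbbound' : |b| ≤ ‖p‖ * C := by
        refine hbbound.trans ?_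
        rw [hC_def]; nlinarith
      have hlt : ‖p‖ * C < f_max := by
        have := (mul_lt_mul_of_pos_right hp hC)
        rwa [div_mul_cancel₀ _ hC.ne'] at this
      refine ⟨(Pi.single i a : Fin N → ℝ) + (Pi.single j b : Fin N → ℝ), fun k => ?_, ?_⟩
      · by_cases hki : k = i
        · subst hki
          simp [Pi.single_eq_same, Pi.single_eq_of_ne hij'.symm, hij']
          calc |a| ≤ ‖p‖ * C := habound
            _ ≤ f_max := hlt.le
        · by_cases hkj : k = j
          · subst hkj
            simp [Pi.single_eq_same, Pi.single_eq_of_ne hki]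
            calc |b| ≤ ‖p‖ * C := hbbound'
              _ ≤ f_max := hlt.le
          · simp [Pi.single_eq_of_ne hki, Pi.single_eq_of_ne hkj, hf.le]
      · have hsum1 : ∑ k, ((Pi.single i a : Fin N → ℝ) + (Pi.single j b : Fin N → ℝ)) k = a + b := by
          simp only [Pi.add_apply, Finset.sum_add_distrib]
          rw [Finset.sum_pi_single', Finset.sum_pi_single']
          simp
        have hsum2 : ∑ k, ((Pi.single i a : Fin N → ℝ) + (Pi.single j b : Fin N → ℝ)) k * x k
            = a * x i + b * x j := by
          simp only [Pi.add_apply, add_mul, Finset.sum_add_distrib]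
          congr 1
          · rw [Finset.sum_eq_single i]
            · simp
            · intro k _ hki; simp [Pi.single_eq_of_ne hki]
            · intro h; simp at h
          · rw [Finset.sum_eq_single j]
            · simp
            · intro k _ hkj; simp [Pi.single_eq_of_ne hkj]
            · intro h; simp at h
        have hab1 : a + b = p.1 := by rw [ha_def]; ring
        have hab2 : a * x i + b * x j = p.2 := by
          rw [ha_def, hb_def]
          field_simp
          ring
        rw [hsum1, hsum2, hab1, hab2]
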